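/- The dual function J_f(Λ̃,Γ̃) = −(c/2)·Σ_{h,j,k,l} log(λ̃_{hj} + γ̃_{kl}) + (1/2)Σ_{h,j} λ̃_{hj} c'_{hj} + (1/2)Σ_{k,l} γ̃_{kl} c''_{kl}, with all c'_{hj}, c''_{kl} > 0 and c > 0, is coercive on the set C = {(Λ̃,Γ̃) : λ̃_{hj} ≥ 0, γ̃_{kl} ≥ 0, λ̃_{hj}+γ̃_{kl} > 0 for all indices}: along any sequence in C where some λ̃_{hj} → ∞ or some γ̃_{kl} → ∞, or where some λ̃_{hj}+γ̃_{kl} → 0, the value of J_f tends to +∞. -/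

import Mathlib

/-!
Spreading each linear term evenly over the pairs it occurs in writes `J_f` as a sum over pairs
`(a, b)` of `-(c/2) log (λ_a + γ_b) + α_a λ_a + β_b γ_b`, with `α_a = c'_a / (2|B|)` and
`β_b = c''_b / (2|A|)`. Since `m s - (c/2) log s` is bounded below on `s > 0` for every `m > 0`,
each pair term is at least a constant plus `(α_a/2) λ_a + (β_b/2) γ_b`. So all pair terms are
bounded below, and in each of the three cases some pair term tends to `+∞`.
-/

open Filter

/-- The dual function J_f. Index `a` ranges over pairs (h,j) ∈ I₁×I₁ and `b`
over pairs (k,l) ∈ I₂×I₂. -/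
noncomputable def Jf {A B : Type*} [Fintype A] [Fintype B]
    (c : ℝ) (c' : A → ℝ) (c'' : B → ℝ) (lam : A → ℝ) (gam : B → ℝ) : ℝ :=
  -(c / 2) * ∑ a : A, ∑ b : B, Real.log (lam a + gam b) +
    (1 / 2) * ∑ a : A, lam a * c' a + (1 / 2) * ∑ b : B, gam b * c'' b

lemma tendsto_sum_atTop_of_forall_bddBelow {ι α G : Type*} [Fintype ι] [AddCommGroup G]
    [PartialOrder G] [IsOrderedAddMonoid G] {l : Filter α} {f : ι → α → G} {i : ι}
    (hi : Tendsto (f i) l atTop) (hbdd : ∀ j, BddBelow (Set.range (f j))) :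
    Tendsto (fun x => ∑ j, f j x) l atTop := by
  classical
  choose K hK using hbdd
  have hsplit : ∀ x, ∑ j, f j x = ∑ j ∈ Finset.univ.erase i, f j x + f i x := fun x =>
    (Finset.sum_erase_add _ _ (Finset.mem_univ i)).symm
  simp only [hsplit]
  exact tendsto_atTop_add_left_of_le l _
    (fun x => Finset.sum_le_sum fun j _ => hK j (Set.mem_range_self x)) hi

lemma Real.mul_log_le {c m s : ℝ} (hc : 0 < c) (hm : 0 < m) (hs : 0 < s) :
    c * Real.log s ≤ m * s + c * (Real.log (c / m) - 1) := by
  have h := Real.log_le_sub_one_of_pos (show 0 < m * s / c by positivity)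
  rw [Real.log_div (by positivity) hc.ne', Real.log_mul hm.ne' hs.ne'] at h
  rw [Real.log_div hc.ne' hm.ne']
  have hcancel : c * (m * s / c) = m * s := by field_simp
  linarith [mul_le_mul_of_nonneg_left h hc.le]

namespace Jf

noncomputable def pairTerm (c α β x y : ℝ) : ℝ :=
  -(c / 2) * Real.log (x + y) + α * x + β * y

lemma exists_add_le_pairTerm {c α β : ℝ} (hc : 0 < c) (hα : 0 < α) (hβ : 0 < β) :
    ∃ K, ∀ x y, 0 ≤ x → 0 ≤ y → 0 < x + y →
      K + α / 2 * x + β / 2 * y ≤ pairTerm c α β x y := by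
  set m := min α β / 2
  have hm : 0 < m := by positivity
  refine ⟨-(c / 2) * (Real.log (c / 2 / m) - 1), fun x y hx hy hxy => ?_⟩
  have hlog := Real.mul_log_le (half_pos hc) hm hxy
  have hmα : m ≤ α / 2 := by simp only [m]; linarith [min_le_left α β]
  have hmβ : m ≤ β / 2 := by simp only [m]; linarith [min_le_right α β]
  unfold pairTerm
  linarith [mul_le_mul_of_nonneg_right hmα hx, mul_le_mul_of_nonneg_right hmβ hy]

lemma neg_mul_log_le_pairTerm {c α β x y : ℝ} (hα : 0 ≤ α) (hβ : 0 ≤ β) (hx : 0 ≤ x)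
    (hy : 0 ≤ y) : -(c / 2) * Real.log (x + y) ≤ pairTerm c α β x y := by
  unfold pairTerm
  linarith [mul_nonneg hα hx, mul_nonneg hβ hy]

lemma pairTerm_comm (c α β x y : ℝ) : pairTerm c α β x y = pairTerm c β α y x := by
  unfold pairTerm
  rw [add_comm x y]
  ring

section Sequences

variable {ι : Type*} {l : Filter ι} {c α β : ℝ} {x y : ι → ℝ}

lemma bddBelow_range_pairTerm (hc : 0 < c) (hα : 0 < α) (hβ : 0 < β) (hx : ∀ i, 0 ≤ x i)
    (hy : ∀ i, 0 ≤ y i) (hxy : ∀ i, 0 < x i + y i) :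
    BddBelow (Set.range fun i => pairTerm c α β (x i) (y i)) := by
  obtain ⟨K, hK⟩ := exists_add_le_pairTerm hc hα hβ
  refine ⟨K, ?_⟩
  rintro _ ⟨i, rfl⟩
  linarith [hK _ _ (hx i) (hy i) (hxy i), mul_nonneg hα.le (hx i), mul_nonneg hβ.le (hy i)]

lemma tendsto_pairTerm_of_tendsto_left (hc : 0 < c) (hα : 0 < α) (hβ : 0 < β)
    (hx : ∀ i, 0 ≤ x i) (hy : ∀ i, 0 ≤ y i) (hxy : ∀ i, 0 < x i + y i)
    (h : Tendsto x l atTop) : Tendsto (fun i => pairTerm c α β (x i) (y i)) l atTop := by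
  obtain ⟨K, hK⟩ := exists_add_le_pairTerm hc hα hβ
  refine tendsto_atTop_mono (fun i => ?_) <|
    tendsto_atTop_add_const_left l K (h.const_mul_atTop (half_pos hα))
  linarith [hK _ _ (hx i) (hy i) (hxy i), mul_nonneg hβ.le (hy i)]

lemma tendsto_pairTerm_of_tendsto_right (hc : 0 < c) (hα : 0 < α) (hβ : 0 < β)
    (hx : ∀ i, 0 ≤ x i) (hy : ∀ i, 0 ≤ y i) (hxy : ∀ i, 0 < x i + y i)
    (h : Tendsto y l atTop) : Tendsto (fun i => pairTerm c α β (x i) (y i)) l atTop := by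
  simpa only [pairTerm_comm c α β] using
    tendsto_pairTerm_of_tendsto_left hc hβ hα hy hx (fun i => by linarith [hxy i]) h

lemma tendsto_pairTerm_of_tendsto_add_zero (hc : 0 < c) (hα : 0 ≤ α) (hβ : 0 ≤ β)
    (hx : ∀ i, 0 ≤ x i) (hy : ∀ i, 0 ≤ y i) (hxy : ∀ i, 0 < x i + y i)
    (h : Tendsto (fun i => x i + y i) l (nhds 0)) :
    Tendsto (fun i => pairTerm c α β (x i) (y i)) l atTop := by
  have hlog : Tendsto (fun i => Real.log (x i + y i)) l atBot :=
    Real.tendsto_log_nhdsGT_zero.comp <| tendsto_nhdsWithin_iff.2 ⟨h, .of_forall hxy⟩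
  exact tendsto_atTop_mono (fun i => neg_mul_log_le_pairTerm hα hβ (hx i) (hy i))
    (hlog.const_mul_atBot_of_neg (by linarith))

end Sequences

lemma eq_sum_pairTerm {A B : Type*} [Fintype A] [Fintype B] [Nonempty A] [Nonempty B]
    (c : ℝ) (c' : A → ℝ) (c'' : B → ℝ) (lam : A → ℝ) (gam : B → ℝ) :
    Jf c c' c'' lam gam = ∑ p : A × B, pairTerm c (c' p.1 / (2 * Fintype.card B))
      (c'' p.2 / (2 * Fintype.card A)) (lam p.1) (gam p.2) := by
  have hA : (Fintype.card A : ℝ) ≠ 0 := by positivity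
  have hB : (Fintype.card B : ℝ) ≠ 0 := by positivity
  simp only [Jf, pairTerm, Fintype.sum_prod_type, Finset.sum_add_distrib, Finset.mul_sum,
    Finset.sum_const, Finset.card_univ, nsmul_eq_mul]
  congr 1
  · congr 1
    exact Finset.sum_congr rfl fun a _ => by field_simp
  · exact Finset.sum_congr rfl fun b _ => by field_simp

end Jf

theorem Jf_coercive {A B : Type*} [Fintype A] [Fintype B] [Nonempty A] [Nonempty B]
    (c : ℝ) (hc : 0 < c) (c' : A → ℝ) (hc' : ∀ a, 0 < c' a)
    (c'' : B → ℝ) (hc'' : ∀ b, 0 < c'' b)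
    (lam : ℕ → A → ℝ) (gam : ℕ → B → ℝ)
    (hmem : ∀ n, (∀ a, 0 ≤ lam n a) ∧ (∀ b, 0 ≤ gam n b) ∧
      (∀ a b, 0 < lam n a + gam n b))
    (hblow : (∃ a, Tendsto (fun n => lam n a) atTop atTop) ∨
      (∃ b, Tendsto (fun n => gam n b) atTop atTop) ∨
      (∃ a b, Tendsto (fun n => lam n a + gam n b) atTop (nhds 0))) :
    Tendsto (fun n => Jf c c' c'' (lam n) (gam n)) atTop atTop := by
  simp only [Jf.eq_sum_pairTerm]
  have hα (a : A) : 0 < c' a / (2 * Fintype.card B) := by have := hc' a; positivity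
  have hβ (b : B) : 0 < c'' b / (2 * Fintype.card A) := by have := hc'' b; positivity
  have hlam (a : A) n := (hmem n).1 a
  have hgam (b : B) n := (hmem n).2.1 b
  have hsum (a : A) (b : B) n := (hmem n).2.2 a b
  obtain ⟨p, hp⟩ : ∃ p : A × B, Tendsto
      (fun n => Jf.pairTerm c (c' p.1 / (2 * Fintype.card B)) (c'' p.2 / (2 * Fintype.card A))
        (lam n p.1) (gam n p.2)) atTop atTop := by
    rcases hblow with ⟨a, ha⟩ | ⟨b, hb⟩ | ⟨a, b, hab⟩
    · obtain ⟨b⟩ := ‹Nonempty B›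
      exact ⟨(a, b), Jf.tendsto_pairTerm_of_tendsto_left hc (hα a) (hβ b)
        (hlam a) (hgam b) (hsum a b) ha⟩
    · obtain ⟨a⟩ := ‹Nonempty A›
      exact ⟨(a, b), Jf.tendsto_pairTerm_of_tendsto_right hc (hα a) (hβ b)
        (hlam a) (hgam b) (hsum a b) hb⟩
    · exact ⟨(a, b), Jf.tendsto_pairTerm_of_tendsto_add_zero hc (hα a).le (hβ b).le
        (hlam a) (hgam b) (hsum a b) hab⟩
  exact tendsto_sum_atTop_of_forall_bddBelow hp fun q =>
    Jf.bddBelow_range_pairTerm hc (hα q.1) (hβ q.2) (hlam q.1) (hgam q.2) (hsum q.1 q.2)
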